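/- arXiv:0811.4360 — 6 statements merged into one kernel-verified Lean document; each statement's English description precedes it below -/
import Mathlib

section
/- With H_a(X) = a·e^{(1-a²)X} + e^{(1-a^{-2})X} - 1 - a for a > 1 and X_a its unique positive zero: lim_{a→1⁺} X_a = 3/2. -/
/-!
`H_a` is convex with `H_a(0) = 0`, so on `[0, ∞)` it is negative exactly on `(0, X_a)` and
nonnegative from `X_a` on. Expanding both exponentials to second order,
`H_a(t) = (4t² - 6t)(a - 1)² + o((a - 1)²)` as `a → 1`, and `4t² - 6t` changes sign at `t = 3/2`.
Hence for fixed `t` slightly below (above) `3/2`, `H_a(t)` is negative (positive) for `a` close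
to `1`, which traps `X_a` between the two.
-/

open Real Filter Topology Asymptotics Set

noncomputable def H (a t : ℝ) : ℝ :=
  a * exp ((1 - a ^ 2) * t) + exp ((1 - (a ^ 2)⁻¹) * t) - 1 - a

lemma H_zero (a : ℝ) : H a 0 = 0 := by simp [H]

section Convexity

lemma convexOn_exp_mul (c : ℝ) : ConvexOn ℝ univ fun t => exp (c * t) :=
  convexOn_exp.comp_linearMap (LinearMap.mul ℝ ℝ c)

lemma convexOn_H {a : ℝ} (ha : 0 ≤ a) : ConvexOn ℝ univ (H a) := by
  have hH : H a = fun t => a • exp ((1 - a ^ 2) * t) + exp ((1 - (a ^ 2)⁻¹) * t) + (-1 - a) := by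
    ext t
    simp only [H, smul_eq_mul]
    ring
  rw [hH]
  exact (((convexOn_exp_mul _).smul ha).add (convexOn_exp_mul _)).add_const _

variable {f : ℝ → ℝ} {x t : ℝ}

lemma ConvexOn.lt_of_apply_neg (hf : ConvexOn ℝ (Ici 0) f) (hf0 : f 0 = 0) (hx : 0 < x)
    (hfx : f x = 0) (ht : f t < 0) : t < x := by
  by_contra! hxt
  have h := hf.secant_mono (a := 0) self_mem_Ici hx.le (hx.le.trans hxt) hx.ne'
    (hx.trans_le hxt).ne' hxt
  simp only [hf0, hfx, sub_zero, zero_div] at h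
  exact (div_neg_of_neg_of_pos ht (hx.trans_le hxt)).not_ge h

lemma ConvexOn.lt_of_apply_pos (hf : ConvexOn ℝ (Ici 0) f) (hf0 : f 0 = 0) (hfx : f x = 0)
    (ht₀ : 0 ≤ t) (ht : 0 < f t) : x < t := by
  by_contra! hxt
  have h := hf.le_on_segment self_mem_Ici (ht₀.trans hxt : 0 ≤ x) (z := t)
  rw [segment_eq_Icc (ht₀.trans hxt), hf0, hfx, max_self] at h
  exact (h ⟨ht₀, hxt⟩).not_gt ht

end Convexity

section Asymptotics

noncomputable def expRem (x : ℝ) : ℝ := exp x - (1 + x + x ^ 2 / 2)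

lemma expRem_isBigO : expRem =O[𝓝 0] (· ^ 3) := by
  have h := exp_sub_sum_range_isBigO_pow 3
  simp only [Finset.sum_range_succ, Finset.sum_range_zero] at h
  refine h.congr_left fun x => ?_
  simp [expRem, Nat.factorial]

lemma expRem_comp_isLittleO {g : ℝ → ℝ} {x₀ : ℝ} (hg : DifferentiableAt ℝ g x₀)
    (hg0 : g x₀ = 0) : (fun x => expRem (g x)) =o[𝓝 x₀] fun x => (x - x₀) ^ 2 := by
  have hsub : Tendsto (· - x₀) (𝓝 x₀) (𝓝 0) := tendsto_sub_nhds_zero_iff.2 tendsto_id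
  have hlin : g =O[𝓝 x₀] (· - x₀) := by simpa [hg0] using hg.isBigO_sub
  have hcube : (fun x => (x - x₀) ^ 3) =o[𝓝 x₀] fun x => (x - x₀) ^ 2 :=
    (isLittleO_pow_pow (𝕜 := ℝ) (by norm_num : 2 < 3)).comp_tendsto hsub
  exact ((expRem_isBigO.comp_tendsto (hlin.trans_tendsto hsub)).trans (hlin.pow 3)).trans_isLittleO
    hcube

noncomputable def secondOrderCoeff (t a : ℝ) : ℝ :=
  -t * ((a + 1) * (a ^ 2 + a + 1)) / a ^ 2 + t ^ 2 * (a + 1) ^ 2 * (a + 1 / a ^ 4) / 2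

lemma secondOrderCoeff_one (t : ℝ) : secondOrderCoeff t 1 = 4 * t ^ 2 - 6 * t := by
  norm_num [secondOrderCoeff]
  ring

lemma H_eq_secondOrder_add_expRem (t : ℝ) {a : ℝ} (ha : a ≠ 0) :
    H a t = (a - 1) ^ 2 * secondOrderCoeff t a
      + a * expRem ((1 - a ^ 2) * t) + expRem ((1 - (a ^ 2)⁻¹) * t) := by
  simp only [H, expRem, secondOrderCoeff]
  field_simp
  ring

lemma isLittleO_H_sub (t : ℝ) :
    (fun a => H a t - (a - 1) ^ 2 * (4 * t ^ 2 - 6 * t)) =o[𝓝 1] fun a => (a - 1) ^ 2 := by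
  have hcoeff : Tendsto (fun a => secondOrderCoeff t a - (4 * t ^ 2 - 6 * t)) (𝓝 1) (𝓝 0) := by
    have hc : ContinuousAt (secondOrderCoeff t) 1 := by
      unfold secondOrderCoeff
      fun_prop (disch := norm_num)
    simpa [secondOrderCoeff_one] using tendsto_sub_nhds_zero_iff.2 hc.tendsto
  have hmain : (fun a => (a - 1) ^ 2 * (secondOrderCoeff t a - (4 * t ^ 2 - 6 * t))) =o[𝓝 1]
      fun a => (a - 1) ^ 2 := by
    simpa using (isBigO_refl (fun a : ℝ => (a - 1) ^ 2) (𝓝 1)).mul_isLittleO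
      ((isLittleO_one_iff ℝ).2 hcoeff)
  have hrem₁ : (fun a : ℝ => a * expRem ((1 - a ^ 2) * t)) =o[𝓝 1] fun a => (a - 1) ^ 2 := by
    simpa using (continuous_id.tendsto 1).isBigO_one ℝ |>.mul_isLittleO
      (expRem_comp_isLittleO (by fun_prop) (by norm_num))
  have hrem₂ : (fun a : ℝ => expRem ((1 - (a ^ 2)⁻¹) * t)) =o[𝓝 1] fun a => (a - 1) ^ 2 :=
    expRem_comp_isLittleO (by fun_prop (disch := norm_num)) (by norm_num)
  refine ((hmain.add hrem₁).add hrem₂).congr' ?_ EventuallyEq.rfl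
  filter_upwards [eventually_ne_nhds one_ne_zero] with a ha
  rw [H_eq_secondOrder_add_expRem t ha]
  ring

lemma tendsto_H_div_sq (t : ℝ) :
    Tendsto (fun a => H a t / (a - 1) ^ 2) (𝓝[≠] 1) (𝓝 (4 * t ^ 2 - 6 * t)) := by
  have h : Tendsto (fun a => (H a t - (a - 1) ^ 2 * (4 * t ^ 2 - 6 * t)) / (a - 1) ^ 2)
      (𝓝[≠] 1) (𝓝 0) := (isLittleO_H_sub t).tendsto_div_nhds_zero.mono_left nhdsWithin_le_nhds
  refine (zero_add (4 * t ^ 2 - 6 * t) ▸ h.add_const (4 * t ^ 2 - 6 * t)).congr' ?_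
  filter_upwards [self_mem_nhdsWithin] with a ha
  have : (a - 1) ^ 2 ≠ 0 := pow_ne_zero 2 (sub_ne_zero.2 ha)
  rw [sub_div, mul_div_cancel_left₀ _ this, sub_add_cancel]

lemma eventually_H_neg {t : ℝ} (ht₀ : 0 < t) (ht : t < 3 / 2) : ∀ᶠ a in 𝓝[≠] 1, H a t < 0 := by
  filter_upwards [(tendsto_H_div_sq t).eventually_lt_const (by nlinarith : 4 * t ^ 2 - 6 * t < 0)]
    with a ha
  exact neg_of_div_neg_left ha (sq_nonneg _)

lemma eventually_H_pos {t : ℝ} (ht : 3 / 2 < t) : ∀ᶠ a in 𝓝[≠] 1, 0 < H a t := by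
  filter_upwards [(tendsto_H_div_sq t).eventually_const_lt (by nlinarith : 0 < 4 * t ^ 2 - 6 * t),
    self_mem_nhdsWithin] with a ha ha₁
  exact (div_pos_iff_of_pos_right (sq_pos_of_ne_zero (sub_ne_zero.2 ha₁))).1 ha

end Asymptotics

/-- If `X a` denotes the unique positive zero of
`H_a(X) = a e^{(1-a²)X} + e^{(1-a⁻²)X} - 1 - a` for each `a > 1`, then
`X a → 3/2` as `a → 1⁺`. -/
theorem stmt_6 (X : ℝ → ℝ)
    (hX : ∀ a : ℝ, 1 < a → 0 < X a ∧
      a * Real.exp ((1 - a ^ 2) * X a) + Real.exp ((1 - (a ^ 2)⁻¹) * X a) - 1 - a = 0) :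
    Filter.Tendsto X (nhdsWithin 1 (Set.Ioi 1)) (nhds (3 / 2)) := by
  have hroot : ∀ᶠ a in 𝓝[>] 1, ConvexOn ℝ (Ici 0) (H a) ∧ 0 < X a ∧ H a (X a) = 0 :=
    eventually_nhdsWithin_of_forall fun a ha =>
      ⟨(convexOn_H (by linarith [mem_Ioi.1 ha])).subset (subset_univ _) (convex_Ici 0), hX a ha⟩
  have hle : 𝓝[>] (1 : ℝ) ≤ 𝓝[≠] 1 := nhdsWithin_mono _ fun a ha => ne_of_gt ha
  refine tendsto_order.2 ⟨fun b hb => ?_, fun b hb => ?_⟩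
  · have ht : 0 < max b 1 ∧ max b 1 < 3 / 2 := ⟨by positivity, max_lt hb (by norm_num)⟩
    filter_upwards [hroot, hle (eventually_H_neg ht.1 ht.2)] with a ⟨hconv, hpos, hzero⟩ hneg
    exact (le_max_left b 1).trans_lt (hconv.lt_of_apply_neg (H_zero a) hpos hzero hneg)
  · filter_upwards [hroot, hle (eventually_H_pos hb)] with a ⟨hconv, _, hzero⟩ hpos
    exact hconv.lt_of_apply_pos (H_zero a) hzero (by linarith) hpos
end

section
/- For a = √2, the unique positive zero X_a of H_a(X) = a·e^{(1-a²)X} + e^{(1-a^{-2})X} - 1 - a satisfies X_a = 2 log q where q = (√2/2)(1 + √(1 + 2√2)), and X_a < 3/2. -/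
open Real

private lemma aux_q_lt (s t : ℝ) (hsub : s < 1.41422) (htub : t < 1.957)
    (hspos : 0 < s) (htpos : 0 < t) : s / 2 * (1 + t) < 2.1 := by
  nlinarith [mul_lt_mul'' hsub htub hspos.le htpos.le]

private lemma aux_exp : (2.1:ℝ) < Real.exp (3/4) := by
  have hE3 : (19.4481:ℝ) < Real.exp 3 := by
    calc (19.4481:ℝ) < 2.7182818283 ^ 3 := by norm_num
      _ < Real.exp 1 ^ 3 := by
          gcongr
          exact Real.exp_one_gt_d9
      _ = Real.exp 3 := by rw [← Real.exp_nat_mul]; norm_num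
  have hpow : Real.exp (3/4) ^ 4 = Real.exp 3 := by
    rw [← Real.exp_nat_mul]; norm_num
  have h4 : ((2.1:ℝ)) ^ 4 < Real.exp (3/4) ^ 4 := by
    rw [hpow]; nlinarith [hE3]
  exact lt_of_pow_lt_pow_left₀ 4 (Real.exp_pos _).le h4

/-- For `a = √2`, the unique positive zero `X` of
`H_a(X) = a e^{(1-a²)X} + e^{(1-a⁻²)X} - 1 - a` equals `2 log q` where
`q = (√2/2)(1 + √(1+2√2))`, and `X < 3/2`. -/
theorem stmt_7 (X : ℝ → ℝ) (a : ℝ) (ha : a = Real.sqrt 2) (hXpos : 0 < X a)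
    (hXzero : a * Real.exp ((1 - a ^ 2) * X a) + Real.exp ((1 - (a ^ 2)⁻¹) * X a) - 1 - a = 0) :
    X a = 2 * Real.log (Real.sqrt 2 / 2 * (1 + Real.sqrt (1 + 2 * Real.sqrt 2))) ∧
    X a < 3 / 2 := by
  subst ha
  set x := X (Real.sqrt 2) with hxdef
  set s := Real.sqrt 2 with hsdef
  have hs2 : s ^ 2 = 2 := Real.sq_sqrt (by norm_num)
  have hspos : (0:ℝ) < s := Real.sqrt_pos.mpr (by norm_num)
  have hslb : 1.414 < s := by
    rw [show (1.414:ℝ) = Real.sqrt (1.414^2) from (Real.sqrt_sq (by norm_num)).symm]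
    exact Real.sqrt_lt_sqrt (by norm_num) (by norm_num)
  have hsub : s < 1.41422 := by
    rw [show (1.41422:ℝ) = Real.sqrt (1.41422^2) from (Real.sqrt_sq (by norm_num)).symm]
    exact Real.sqrt_lt_sqrt (by norm_num) (by norm_num)
  set t := Real.sqrt (1 + 2 * s) with htdef
  have ht2 : t ^ 2 = 1 + 2 * s := Real.sq_sqrt (by positivity)
  have htpos : (0:ℝ) < t := Real.sqrt_pos.mpr (by positivity)
  have ht1 : 1 < t := by nlinarith
  set q := s / 2 * (1 + t) with hqdef
  have hq2 : q ^ 2 = s * q + s := by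
    rw [hqdef]
    linear_combination ((1+t)^2/4 - (1+t)/2) * hs2 + (1/2) * ht2
  have hqgt : s < q := by rw [hqdef]; nlinarith
  set u := Real.exp (x / 2) with hudef
  have hupos : (0:ℝ) < u := Real.exp_pos _
  have hu1 : 1 < u := by
    rw [hudef, show (1:ℝ) = Real.exp 0 from Real.exp_zero.symm]
    exact Real.exp_lt_exp.mpr (by linarith)
  have he1 : Real.exp ((1 - s ^ 2) * x) = u⁻¹ * u⁻¹ := by
    rw [hs2, hudef, ← Real.exp_neg, ← Real.exp_add]
    ring_nf
  have he2 : Real.exp ((1 - (s ^ 2)⁻¹) * x) = u := by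
    rw [hs2, hudef]; norm_num; ring_nf
  rw [he1, he2] at hXzero
  have hcubic : u ^ 3 - (1 + s) * u ^ 2 + s = 0 := by
    have hu0 : u ≠ 0 := ne_of_gt hupos
    field_simp at hXzero
    nlinarith [hXzero]
  have hfac : (u - 1) * (u ^ 2 - s * u - s) = 0 := by linear_combination hcubic
  have hu2 : u ^ 2 = s * u + s := by
    rcases mul_eq_zero.mp hfac with h | h
    · exfalso; linarith
    · linarith
  have huq : u = q := by
    have : (u - q) * (u + q - s) = 0 := by linear_combination hu2 - hq2
    rcases mul_eq_zero.mp this with h | h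
    · linarith
    · exfalso; nlinarith
  have hxq : x = 2 * Real.log q := by
    have : Real.log u = x / 2 := by rw [hudef, Real.log_exp]
    rw [← huq, this]; ring
  refine ⟨hxq, ?_⟩
  -- bound: q < 2.1 and 2.1 < exp (3/4)
  have htub : t < 1.957 := by
    rw [htdef, show (1.957:ℝ) = Real.sqrt (1.957^2) from (Real.sqrt_sq (by norm_num)).symm]
    exact Real.sqrt_lt_sqrt (by positivity) (by nlinarith)
  have hq21 : q < 2.1 := by
    rw [hqdef]
    exact aux_q_lt s t hsub htub hspos htpos
  have hexp : (2.1:ℝ) < Real.exp (3/4) := aux_exp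
  have : x < 3/2 := by
    rw [hxq]
    have hlog : Real.log q < 3/4 := by
      have := Real.log_lt_log (by linarith) (lt_trans hq21 hexp)
      calc Real.log q < Real.log (Real.exp (3/4)) := Real.log_lt_log (by linarith) (lt_trans hq21 hexp)
        _ = 3/4 := Real.log_exp _
    linarith
  exact this
end

section
/- There exists f ∈ L¹(ℝ), real, even, not identically zero, with f = f̂ and f(0) = 0, such that f(x) ≥ 0 for all |x| ≥ √(3/(2π)). Consequently A := inf A(f) over all such f satisfies A ≤ √(3/(2π)). -/
/-!
The Gaussian `G(x) = e^{-πx²}` is fixed by the Fourier transform, and `𝓕` turns multiplication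
by `-2πix` into differentiation; hence `𝓕((-2πix)ⁿ G) = G⁽ⁿ⁾ = Pₙ G` for a polynomial `Pₙ`
computed by `Pₙ₊₁ = Pₙ' - 2πx Pₙ`. Solving for `x⁴G` and `x²G` in terms of these shows that
`f(x) = x²(x² - 3/(2π)) e^{-πx²}` is self-dual; it is even, vanishes at `0`, and is
nonnegative exactly where `x² ≥ 3/(2π)`.
-/

open Real MeasureTheory FourierTransform Polynomial

noncomputable def gaussian (x : ℝ) : ℂ := Real.exp (-π * x ^ 2)

noncomputable def gaussianDerivPoly : ℕ → ℝ[X]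
  | 0 => 1
  | n + 1 => derivative (gaussianDerivPoly n) - C (2 * π) * X * gaussianDerivPoly n

theorem hasDerivAt_gaussian (x : ℝ) : HasDerivAt gaussian ((-2 * π * x : ℝ) * gaussian x) x := by
  refine ((hasDerivAt_pow 2 x).const_mul (-π)).exp.ofReal_comp.congr_deriv ?_
  simp only [gaussian]
  push_cast
  ring

theorem hasDerivAt_eval_mul_gaussian (p : ℝ[X]) (x : ℝ) :
    HasDerivAt (fun x : ℝ => ((p.eval x : ℝ) : ℂ) * gaussian x)
      (((derivative p - C (2 * π) * X * p).eval x : ℝ) * gaussian x) x := by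
  refine ((p.hasDerivAt x).ofReal_comp.fun_mul (hasDerivAt_gaussian x)).congr_deriv ?_
  simp only [eval_sub, eval_mul, eval_C, eval_X]
  push_cast
  ring

theorem iteratedDeriv_gaussian (n : ℕ) :
    iteratedDeriv n gaussian = fun x : ℝ => ((gaussianDerivPoly n).eval x : ℝ) * gaussian x := by
  induction n with
  | zero => simp [gaussianDerivPoly]
  | succ n ih =>
    rw [iteratedDeriv_succ, ih]
    exact funext fun x => (hasDerivAt_eval_mul_gaussian _ x).deriv

theorem eval_gaussianDerivPoly_two (x : ℝ) :
    (gaussianDerivPoly 2).eval x = 4 * π ^ 2 * x ^ 2 - 2 * π := by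
  simp only [gaussianDerivPoly, derivative_mul, derivative_sub, derivative_one, derivative_C,
    derivative_zero, derivative_X, eval_sub, eval_mul, eval_add, eval_C, eval_X, eval_one,
    eval_zero]
  ring

theorem eval_gaussianDerivPoly_four (x : ℝ) :
    (gaussianDerivPoly 4).eval x = 16 * π ^ 4 * x ^ 4 - 48 * π ^ 3 * x ^ 2 + 12 * π ^ 2 := by
  simp only [gaussianDerivPoly, derivative_mul, derivative_sub, derivative_one, derivative_C,
    derivative_zero, derivative_X, derivative_add, eval_sub, eval_mul, eval_add, eval_C, eval_X,
    eval_one, eval_zero]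
  ring

theorem fourier_gaussian : 𝓕 gaussian = gaussian := by
  have h : gaussian = fun x : ℝ => Complex.exp (-π * 1 * x ^ 2) := by
    ext x; simp [gaussian, Complex.ofReal_exp]
  rw [h, fourier_gaussian_pi (by simp)]
  simp

theorem integrable_pow_mul_exp_neg_pi_mul_sq (n : ℕ) :
    Integrable fun x : ℝ => x ^ n * Real.exp (-π * x ^ 2) := by
  simpa using integrable_rpow_mul_exp_neg_mul_sq pi_pos (s := n)
    (by linarith [n.cast_nonneg (α := ℝ)])

theorem integrable_pow_smul_gaussian (n : ℕ) : Integrable fun x : ℝ => x ^ n • gaussian x := by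
  convert (integrable_pow_mul_exp_neg_pi_mul_sq n).ofReal using 2
  simp [gaussian, Complex.real_smul]

theorem fourier_monomial_smul_gaussian (n : ℕ) :
    𝓕 (fun x : ℝ => (-2 * π * Complex.I * x) ^ n • gaussian x) =
      fun y : ℝ => ((gaussianDerivPoly n).eval y : ℝ) * gaussian y := by
  rw [← Real.iteratedDeriv_fourier (N := n) (fun k _ => integrable_pow_smul_gaussian k) le_rfl,
    fourier_gaussian, iteratedDeriv_gaussian]

theorem integrable_monomial_smul_gaussian (n : ℕ) :
    Integrable fun x : ℝ => (-2 * π * Complex.I * x) ^ n • gaussian x := by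
  refine ((integrable_pow_smul_gaussian n).smul ((-2 * π * Complex.I) ^ n)).congr
    (.of_forall fun x => ?_)
  simp only [Pi.smul_apply, smul_eq_mul, mul_pow, Complex.real_smul, Complex.ofReal_pow]
  ring

theorem fourier_smul_add_smul {f g : ℝ → ℂ} (hf : Integrable f) (hg : Integrable g) (a b : ℂ) :
    𝓕 (a • f + b • g) = a • 𝓕 f + b • 𝓕 g := by
  have hL : Continuous fun p : ℝ × ℝ => innerₗ ℝ p.1 p.2 := continuous_inner
  refine (VectorFourier.fourierIntegral_add continuous_fourierChar hL (hf.smul a)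
    (hg.smul b)).trans ?_
  rw [VectorFourier.fourierIntegral_const_smul, VectorFourier.fourierIntegral_const_smul]
  rfl

/-- The combination of the Hermite functions of degrees 4 and 0 (both fixed by `𝓕`) that
vanishes at the origin. -/
noncomputable def selfDualWitness (x : ℝ) : ℝ :=
  x ^ 2 * (x ^ 2 - 3 / (2 * π)) * Real.exp (-π * x ^ 2)

theorem ofReal_selfDualWitness_eq :
    (fun x => (selfDualWitness x : ℂ)) =
      (1 / (16 * π ^ 4) : ℂ) • (fun x : ℝ => (-2 * π * Complex.I * x) ^ 4 • gaussian x) +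
      (3 / (8 * π ^ 3) : ℂ) • (fun x : ℝ => (-2 * π * Complex.I * x) ^ 2 • gaussian x) := by
  ext x
  have hπ : (π : ℂ) ≠ 0 := Complex.ofReal_ne_zero.mpr pi_ne_zero
  simp only [selfDualWitness, gaussian, Pi.add_apply, Pi.smul_apply, smul_eq_mul, mul_pow,
    Complex.I_pow_four, Complex.I_sq]
  push_cast
  field_simp
  ring

theorem fourier_selfDualWitness :
    𝓕 (fun x => (selfDualWitness x : ℂ)) = fun y => (selfDualWitness y : ℂ) := by
  have hπ : (π : ℂ) ≠ 0 := Complex.ofReal_ne_zero.mpr pi_ne_zero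
  ext y
  rw [ofReal_selfDualWitness_eq, fourier_smul_add_smul (integrable_monomial_smul_gaussian 4)
    (integrable_monomial_smul_gaussian 2), fourier_monomial_smul_gaussian,
    fourier_monomial_smul_gaussian]
  simp only [Pi.add_apply, Pi.smul_apply, smul_eq_mul, eval_gaussianDerivPoly_four,
    eval_gaussianDerivPoly_two, selfDualWitness, gaussian]
  push_cast
  field_simp
  ring

theorem integrable_selfDualWitness : Integrable selfDualWitness := by
  refine ((integrable_pow_mul_exp_neg_pi_mul_sq 4).sub
    ((integrable_pow_mul_exp_neg_pi_mul_sq 2).const_mul (3 / (2 * π)))).congr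
    (.of_forall fun x => ?_)
  simp only [selfDualWitness, Pi.sub_apply]
  ring

theorem selfDualWitness_neg (x : ℝ) : selfDualWitness (-x) = selfDualWitness x := by
  simp only [selfDualWitness, neg_sq]

theorem selfDualWitness_ne_zero : selfDualWitness ≠ 0 := by
  intro h
  have h1 : selfDualWitness 1 = (1 - 3 / (2 * π)) * Real.exp (-π) := by
    norm_num [selfDualWitness]
  have h3 : 3 / (2 * π) < 1 := by
    rw [div_lt_one (by positivity)]
    linarith [pi_gt_three]
  rw [congrFun h 1, Pi.zero_apply] at h1
  nlinarith [Real.exp_pos (-π)]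

theorem selfDualWitness_zero : selfDualWitness 0 = 0 := by
  simp [selfDualWitness]

theorem selfDualWitness_nonneg {x : ℝ} (hx : √(3 / (2 * π)) ≤ |x|) : 0 ≤ selfDualWitness x := by
  rw [← Real.sqrt_sq_eq_abs, Real.sqrt_le_sqrt_iff (sq_nonneg x)] at hx
  have := sub_nonneg.2 hx
  unfold selfDualWitness
  positivity

/-- There exists a real, even, nonzero `f ∈ L¹(ℝ)` with `f = f̂`, `f 0 = 0`, and
`f ≥ 0` on `{|x| ≥ √(3/(2π))}`; consequently the infimum of the radii `r` beyond
which such a function can be nonnegative is at most `√(3/(2π))`. -/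
theorem stmt_9 :
    (∃ f : ℝ → ℝ, Integrable f ∧ (∀ x, f (-x) = f x) ∧ f ≠ 0 ∧
      (∀ y, FourierTransform.fourier (fun x => (f x : ℂ)) y = (f y : ℂ)) ∧ f 0 = 0 ∧
      ∀ x : ℝ, Real.sqrt (3 / (2 * π)) ≤ |x| → 0 ≤ f x) ∧
    sInf {r : ℝ | 0 < r ∧ ∃ f : ℝ → ℝ, Integrable f ∧ (∀ x, f (-x) = f x) ∧ f ≠ 0 ∧
        (∀ y, FourierTransform.fourier (fun x => (f x : ℂ)) y = (f y : ℂ)) ∧ f 0 = 0 ∧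
        ∀ x : ℝ, r ≤ |x| → 0 ≤ f x}
      ≤ Real.sqrt (3 / (2 * π)) := by
  refine ⟨⟨selfDualWitness, ?spec⟩, csInf_le ⟨0, fun r hr => hr.1.le⟩
    ⟨Real.sqrt_pos.2 (by positivity), selfDualWitness, ?spec⟩⟩
  exact ⟨integrable_selfDualWitness, selfDualWitness_neg, selfDualWitness_ne_zero,
    congrFun fourier_selfDualWitness, selfDualWitness_zero, fun _ => selfDualWitness_nonneg⟩
end

section
/- Let f ∈ L¹(ℝᵈ) be real, radial, not identically zero, with f = f̂ (Fourier convention f̂(y) = ∫ f(x)e^{-2πi x·y}dx), f(0) = 0, and f(x) ≥ 0 for ‖x‖ ≥ A. Then A² ≥ (1/π)·(Γ(d/2+1)/2)^{2/d}. -/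
/-!
Let `I = ∫ |f|`. Self-duality gives `∫ f = 𝓕 f 0 = f 0 = 0` and `|f| ≤ ‖𝓕 f‖₁ = I` pointwise,
so `I > 0` as `f ≠ 0`. Since `f ≥ 0` outside the ball `B = B(0, A)`, the vanishing of `∫ f`
forces `∫_B |f| ≥ I / 2`, while the sup bound gives `∫_B |f| ≤ I · vol B`. Hence `vol B ≥ 1/2`,
which is the claimed inequality after inserting `vol B = π^{d/2} A^d / Γ(d/2 + 1)`.
-/

open Real MeasureTheory Metric
open scoped FourierTransform

theorem integral_abs_le_two_mul_setIntegral_abs {α : Type*} [MeasurableSpace α] {μ : Measure α}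
    {f : α → ℝ} {s : Set α} (hf : Integrable f μ) (h0 : ∫ x, f x ∂μ = 0)
    (hs : MeasurableSet s) (hpos : ∀ x ∉ s, 0 ≤ f x) :
    ∫ x, |f x| ∂μ ≤ 2 * ∫ x in s, |f x| ∂μ := by
  have hsplit : ∫ x, |f x| ∂μ = (∫ x in s, |f x| ∂μ) + ∫ x in sᶜ, f x ∂μ := by
    rw [← integral_add_compl hs hf.abs]
    congr 1
    exact setIntegral_congr_fun hs.compl fun x hx => abs_of_nonneg (hpos x hx)
  have hcompl : ∫ x in sᶜ, f x ∂μ = -∫ x in s, f x ∂μ := by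
    rw [← integral_add_compl hs hf] at h0
    linarith
  have habs : -∫ x in s, f x ∂μ ≤ ∫ x in s, |f x| ∂μ :=
    (neg_le_abs _).trans abs_integral_le_integral_abs
  linarith

section FourierSelfDual

variable {V : Type*} [NormedAddCommGroup V] [InnerProductSpace ℝ V] [FiniteDimensional ℝ V]
  [MeasurableSpace V] [BorelSpace V]

theorem Real.fourier_apply_zero {E : Type*} [NormedAddCommGroup E] [NormedSpace ℂ E]
    (f : V → E) : 𝓕 f 0 = ∫ x, f x := by
  simp [Real.fourier_eq]

variable {f : V → ℝ}

theorem abs_le_integral_abs_of_fourier_eq_self (hself : ∀ y, 𝓕 (fun x => (f x : ℂ)) y = f y)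
    (y : V) : |f y| ≤ ∫ x, |f x| := by
  have h : ‖𝓕 (fun x => (f x : ℂ)) y‖ ≤ ∫ x, ‖(f x : ℂ)‖ :=
    VectorFourier.norm_fourierIntegral_le_integral_norm _ _ _ _ _
  simpa [hself] using h

theorem integral_eq_zero_of_fourier_eq_self (hself : ∀ y, 𝓕 (fun x => (f x : ℂ)) y = f y)
    (hf0 : f 0 = 0) : ∫ x, f x = 0 := by
  have h := hself 0
  rw [Real.fourier_apply_zero, integral_complex_ofReal, hf0] at h
  exact_mod_cast h

theorem half_le_measureReal_ball_of_fourier_eq_self (hint : Integrable f) (hne : f ≠ 0)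
    (hself : ∀ y, 𝓕 (fun x => (f x : ℂ)) y = f y) (hf0 : f 0 = 0) {A : ℝ}
    (hpos : ∀ x : V, A ≤ ‖x‖ → 0 ≤ f x) :
    1 / 2 ≤ volume.real (ball (0 : V) A) := by
  set I := ∫ x, |f x|
  have hbound : ∀ y, |f y| ≤ I := abs_le_integral_abs_of_fourier_eq_self hself
  have hI : 0 < I := by
    by_contra! hI
    exact hne (funext fun y => abs_nonpos_iff.mp ((hbound y).trans hI))
  have hhalf : I ≤ 2 * ∫ x in ball 0 A, |f x| :=
    integral_abs_le_two_mul_setIntegral_abs hint (integral_eq_zero_of_fourier_eq_self hself hf0)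
      measurableSet_ball fun x hx => hpos x (by simpa using hx)
  have hball : ∫ x in ball 0 A, |f x| ≤ I * volume.real (ball (0 : V) A) :=
    (le_abs_self _).trans <| norm_setIntegral_le_of_norm_le_const (f := fun x => |f x|)
      measure_ball_lt_top fun x _ => by simpa using hbound x
  nlinarith

end FourierSelfDual

theorem measureReal_ball_euclideanSpace {d : ℕ} [NeZero d] (x : EuclideanSpace ℝ (Fin d))
    {r : ℝ} (hr : 0 ≤ r) :
    volume.real (ball x r) = r ^ d * (√π ^ d / Gamma (d / 2 + 1)) := by
  rw [measureReal_def, EuclideanSpace.volume_ball, ENNReal.toReal_mul, ENNReal.toReal_pow,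
    ENNReal.toReal_ofReal hr, ENNReal.toReal_ofReal (by positivity), Fintype.card_fin]

theorem le_sq_of_half_le_measureReal_ball {d : ℕ} (hd : 1 ≤ d) {A : ℝ}
    (h : 1 / 2 ≤ volume.real (ball (0 : EuclideanSpace ℝ (Fin d)) A)) :
    (1 / π) * (Gamma ((d : ℝ) / 2 + 1) / 2) ^ ((2 : ℝ) / d) ≤ A ^ 2 := by
  have : NeZero d := ⟨by omega⟩
  have hA : 0 < A := by
    by_contra! hA
    rw [ball_eq_empty.mpr hA, measureReal_empty] at h
    norm_num at h
  have hΓ : 0 < Gamma ((d : ℝ) / 2 + 1) := Gamma_pos_of_pos (by positivity)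
  have hvol : Gamma ((d : ℝ) / 2 + 1) / 2 ≤ (A * √π) ^ d := by
    rw [measureReal_ball_euclideanSpace _ hA.le, ← mul_div_assoc, le_div_iff₀ hΓ, ← mul_pow] at h
    linarith
  have hroot : ((A * √π) ^ d) ^ ((2 : ℝ) / d) = π * A ^ 2 := by
    rw [← rpow_natCast, ← rpow_mul (by positivity), mul_div_cancel₀ _ (by positivity),
      rpow_two, mul_pow, sq_sqrt pi_pos.le, mul_comm]
  rw [one_div_mul_eq_div, div_le_iff₀' pi_pos, ← hroot]
  exact rpow_le_rpow (by positivity) hvol (by positivity)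

theorem stmt_10_general (d : ℕ) (hd : 1 ≤ d) (f : EuclideanSpace ℝ (Fin d) → ℝ)
    (hint : Integrable f)
    (hne : f ≠ 0)
    (hself : ∀ y, FourierTransform.fourier (fun x => (f x : ℂ)) y = (f y : ℂ))
    (hf0 : f 0 = 0)
    (A : ℝ) (hpos : ∀ x : EuclideanSpace ℝ (Fin d), A ≤ ‖x‖ → 0 ≤ f x) :
    (1 / π) * (Real.Gamma ((d : ℝ) / 2 + 1) / 2) ^ ((2 : ℝ) / d) ≤ A ^ 2 :=
  le_sq_of_half_le_measureReal_ball hd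
    (half_le_measureReal_ball_of_fourier_eq_self hint hne hself hf0 hpos)

/-- If `f ∈ L¹(ℝᵈ)` is real, radial, nonzero, self-dual under the Fourier transform,
`f 0 = 0`, and `f(x) ≥ 0` for `‖x‖ ≥ A`, then `A² ≥ (1/π)(Γ(d/2+1)/2)^{2/d}`. -/
theorem stmt_10 (d : ℕ) (hd : 1 ≤ d) (f : EuclideanSpace ℝ (Fin d) → ℝ)
    (hint : Integrable f) (hcont : Continuous f)
    (hradial : ∀ x y : EuclideanSpace ℝ (Fin d), ‖x‖ = ‖y‖ → f x = f y)
    (hne : f ≠ 0)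
    (hself : ∀ y, FourierTransform.fourier (fun x => (f x : ℂ)) y = (f y : ℂ))
    (hf0 : f 0 = 0)
    (A : ℝ) (hA : 0 < A) (hpos : ∀ x : EuclideanSpace ℝ (Fin d), A ≤ ‖x‖ → 0 ≤ f x) :
    (1 / π) * (Real.Gamma ((d : ℝ) / 2 + 1) / 2) ^ ((2 : ℝ) / d) ≤ A ^ 2 :=
  stmt_10_general d hd f hint hne hself hf0 A hpos
end

section
/- Let φ(k) = (1+k)e^{-2k} + e^{2(1 - 1/(1+k))} - 2 - k for k near 0. Then the Taylor expansion of φ at 0 has vanishing coefficients up to order 5, and the coefficient of k⁶ equals -4/45. In particular φ(k) < 0 for all sufficiently small k > 0. -/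
/-!
Every derivative of `φ` has the shape `P(k) e^{-2k} + Q(t) e^{2(1-t)} + R(k)` with `t = 1/(1+k)`
and polynomials `P, Q, R`; since `dt/dk = -t²`, differentiation acts on `(P, Q, R)` by
`P ↦ P' - 2P`, `Q ↦ t²(2Q - Q')`, `R ↦ R'`. Iterating this six times and evaluating at `k = 0`
(`t = 1`) gives the Taylor coefficients. Negativity for small `k > 0` then follows from
Taylor's theorem with Peano remainder: `φ(k)/k⁶ → φ⁽⁶⁾(0)/6! < 0`.
-/

open Real Polynomial Filter Topology Set

section DerivativeSequence

variable {𝕜 F : Type*} [NontriviallyNormedField 𝕜] [NormedAddCommGroup F] [NormedSpace 𝕜 F]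
  {g : ℕ → 𝕜 → F} {s : Set 𝕜}

theorem iteratedDeriv_eq_of_hasDerivAt (hs : IsOpen s)
    (hg : ∀ n, ∀ x ∈ s, HasDerivAt (g n) (g (n + 1) x) x) (n : ℕ) :
    ∀ x ∈ s, iteratedDeriv n (g 0) x = g n x := by
  induction n with
  | zero => simp
  | succ n ih =>
    intro x hx
    have hloc : iteratedDeriv n (g 0) =ᶠ[𝓝 x] g n :=
      eventually_of_mem (hs.mem_nhds hx) ih
    rw [iteratedDeriv_succ, hloc.deriv_eq, (hg n x hx).deriv]

theorem contDiffOn_of_hasDerivAt (hs : IsOpen s)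
    (hg : ∀ n, ∀ x ∈ s, HasDerivAt (g n) (g (n + 1) x) x) (n : ℕ) :
    ContDiffOn 𝕜 n (g 0) s := by
  induction n generalizing g with
  | zero => exact contDiffOn_zero.2 fun x hx => (hg 0 x hx).continuousAt.continuousWithinAt
  | succ n ih =>
    rw [Nat.cast_succ, contDiffOn_succ_iff_deriv_of_isOpen hs]
    refine ⟨fun x hx => (hg 0 x hx).differentiableAt.differentiableWithinAt, by simp, ?_⟩
    exact (ih fun m x hx => hg (m + 1) x hx).congr fun x hx => (hg 0 x hx).deriv

end DerivativeSequence

theorem eventually_neg_of_iteratedDeriv {f : ℝ → ℝ} {s : Set ℝ} {x₀ : ℝ} {n : ℕ}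
    (hs : IsOpen s) (hconv : Convex ℝ s) (hx₀ : x₀ ∈ s) (hf : ContDiffOn ℝ n f s)
    (hlow : ∀ i < n, iteratedDeriv i f x₀ = 0) (hn : iteratedDeriv n f x₀ < 0) :
    ∀ᶠ x in 𝓝[>] x₀, f x < 0 := by
  set c := iteratedDeriv n f x₀ / n.factorial
  have htaylor : ∀ x, taylorWithinEval f n s x₀ x = c * (x - x₀) ^ n := by
    intro x
    rw [taylor_within_apply, Finset.sum_range_succ, Finset.sum_eq_zero, zero_add,
      iteratedDerivWithin_of_isOpen hs hx₀, smul_eq_mul]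
    · ring
    · intro i hi
      rw [iteratedDerivWithin_of_isOpen hs hx₀, hlow i (Finset.mem_range.1 hi), smul_zero]
  have hrem := Real.taylor_tendsto hconv hx₀ hf
  rw [hs.nhdsWithin_eq hx₀] at hrem
  have hratio : Tendsto (fun x => f x / (x - x₀) ^ n) (𝓝[>] x₀) (𝓝 c) := by
    have hlim : Tendsto (fun x => (f x - taylorWithinEval f n s x₀ x) / (x - x₀) ^ n + c)
        (𝓝[>] x₀) (𝓝 c) := by
      simpa only [zero_add] using (hrem.mono_left nhdsWithin_le_nhds).add_const c
    refine hlim.congr' ?_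
    filter_upwards [self_mem_nhdsWithin] with x hx
    have hpow : (x - x₀) ^ n ≠ 0 := pow_ne_zero _ (sub_ne_zero.2 (ne_of_gt hx))
    rw [htaylor]
    field_simp
    ring
  have hc : c < 0 := div_neg_of_neg_of_pos hn (by positivity)
  filter_upwards [hratio.eventually_lt_const hc, self_mem_nhdsWithin] with x hx hgt
  have hpos : 0 < (x - x₀) ^ n := pow_pos (sub_pos.2 hgt) n
  simpa using (div_lt_iff₀ hpos).1 hx

noncomputable def expMulDerivPoly (c : ℝ) (P : ℝ[X]) : ℝ[X] := derivative P + C c * P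

noncomputable def invExpDerivPoly (c : ℝ) (Q : ℝ[X]) : ℝ[X] := X ^ 2 * (C c * Q - derivative Q)

theorem hasDerivAt_eval_mul_exp (P : ℝ[X]) (c x : ℝ) :
    HasDerivAt (fun k => P.eval k * exp (c * k))
      ((expMulDerivPoly c P).eval x * exp (c * x)) x := by
  have hexp := ((hasDerivAt_id x).const_mul c).exp
  refine ((P.hasDerivAt x).mul hexp).congr_deriv ?_
  simp only [id_eq, mul_one, expMulDerivPoly, eval_add, eval_mul, eval_C]
  ring

theorem hasDerivAt_eval_inv_mul_exp (Q : ℝ[X]) (c : ℝ) {x : ℝ} (hx : 1 + x ≠ 0) :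
    HasDerivAt (fun k => Q.eval (1 + k)⁻¹ * exp (c * (1 - (1 + k)⁻¹)))
      ((invExpDerivPoly c Q).eval (1 + x)⁻¹ * exp (c * (1 - (1 + x)⁻¹))) x := by
  have hinv : HasDerivAt (fun k : ℝ => (1 + k)⁻¹) (-((1 + x)⁻¹) ^ 2) x := by
    refine (((hasDerivAt_id' x).const_add 1).inv hx).congr_deriv ?_
    field_simp
  have hexp := ((hinv.const_sub 1).const_mul c).exp
  refine (((Q.hasDerivAt _).comp x hinv).mul hexp).congr_deriv ?_
  simp only [inv_pow, mul_neg, neg_mul, Function.comp_apply, neg_neg, invExpDerivPoly, eval_mul,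
    eval_pow, eval_X, eval_sub, eval_C]
  ring

noncomputable def phiDeriv (n : ℕ) (k : ℝ) : ℝ :=
  ((expMulDerivPoly (-2))^[n] (1 + X)).eval k * exp (-2 * k)
    + ((invExpDerivPoly 2)^[n] 1).eval (1 + k)⁻¹ * exp (2 * (1 - (1 + k)⁻¹))
    + (derivative^[n] (-2 - X)).eval k

theorem hasDerivAt_phiDeriv (n : ℕ) {x : ℝ} (hx : 1 + x ≠ 0) :
    HasDerivAt (phiDeriv n) (phiDeriv (n + 1) x) x := by
  simp only [phiDeriv, Function.iterate_succ_apply']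
  exact ((hasDerivAt_eval_mul_exp _ _ _).add (hasDerivAt_eval_inv_mul_exp _ _ hx)).add
    (Polynomial.hasDerivAt _ _)

theorem phiDeriv_zero_eq_zero {n : ℕ} (hn : n ≤ 5) : phiDeriv n 0 = 0 := by
  interval_cases n <;>
    simp [phiDeriv, Function.iterate_succ_apply', expMulDerivPoly, invExpDerivPoly,
      derivative_mul] <;> norm_num

theorem phiDeriv_six_zero : phiDeriv 6 0 = -64 := by
  simp [phiDeriv, Function.iterate_succ_apply', expMulDerivPoly, invExpDerivPoly, derivative_mul]
  norm_num

/-- For `φ(k) = (1+k)e^{-2k} + e^{2(1-1/(1+k))} - 2 - k`, all Taylor coefficients at `0`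
up to order 5 vanish, the coefficient of `k⁶` is `-4/45`, and `φ(k) < 0` for all
sufficiently small `k > 0`. -/
theorem stmt_16 (φ : ℝ → ℝ)
    (hφ : ∀ k, φ k = (1 + k) * Real.exp (-2 * k)
      + Real.exp (2 * (1 - 1 / (1 + k))) - 2 - k) :
    (∀ n : ℕ, n ≤ 5 → iteratedDeriv n φ 0 = 0) ∧
    iteratedDeriv 6 φ 0 / 720 = -4 / 45 ∧
    ∃ δ > 0, ∀ k : ℝ, 0 < k → k < δ → φ k < 0 := by
  have hφ_eq : φ = phiDeriv 0 := funext fun k => by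
    simp only [hφ, phiDeriv, Function.iterate_zero, id_eq, one_div, eval_add, eval_one, eval_X,
      one_mul, eval_sub, eval_neg, eval_ofNat]
    ring
  have hderiv : ∀ n, ∀ x ∈ Ioi (-1 : ℝ), HasDerivAt (phiDeriv n) (phiDeriv (n + 1) x) x :=
    fun n x hx => hasDerivAt_phiDeriv n (by linarith [mem_Ioi.1 hx])
  have h0 : (0 : ℝ) ∈ Ioi (-1) := by norm_num
  have hiter (n : ℕ) : iteratedDeriv n φ 0 = phiDeriv n 0 :=
    hφ_eq ▸ iteratedDeriv_eq_of_hasDerivAt isOpen_Ioi hderiv n 0 h0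
  have hlow (n : ℕ) (hn : n ≤ 5) : iteratedDeriv n φ 0 = 0 :=
    (hiter n).trans (phiDeriv_zero_eq_zero hn)
  have hsix : iteratedDeriv 6 φ 0 = -64 := (hiter 6).trans phiDeriv_six_zero
  refine ⟨hlow, by rw [hsix]; norm_num, ?_⟩
  have hneg : ∀ᶠ k in 𝓝[>] 0, φ k < 0 :=
    eventually_neg_of_iteratedDeriv isOpen_Ioi (convex_Ioi _) h0
      (hφ_eq ▸ contDiffOn_of_hasDerivAt isOpen_Ioi hderiv 6)
      (fun i hi => hlow i (by omega)) (by rw [hsix]; norm_num)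
  obtain ⟨δ, hδ, hsub⟩ := (nhdsGT_basis (0 : ℝ)).eventually_iff.1 hneg
  exact ⟨δ, hδ, fun k hk hkδ => hsub ⟨hk, hkδ⟩⟩
end

section
/- Let A₁ = inf{A(f)} over real even f ∈ L¹(ℝ), f ≠ 0, f = f̂, f(0) = 0, and let B₁⁻ be the analogous infimum of A(f)² with the condition f(0) < 0 replacing f(0) = 0 (and f̂(0) ≤ 0 arising automatically). Then B₁⁻ ≤ 2·A₁². I.e., for every such f with f(0) = 0 and A(f) = a, there exists real even h ∈ L¹ with h(0) < 0, ĥ(0) = 0, and both h ≥ 0 and ĥ ≥ 0 on [a√2, ∞). -/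
/-!
Since `f = f̂` and `f 0 = 0`, we have `∫ f = 0`, so `f b < 0` for some `b`, and necessarily
`|b| < a`. The function `g = (δ_b + δ_{-b} + 2δ_0) * f` satisfies `g 0 = 2 f b < 0` and
`ĝ = (2 cos (2πb·) + 2) f`, so `ĝ 0 = 0` and `ĝ ≥ 0` beyond `a`, while `g ≥ 0` beyond
`a + |b| < 2a`. The dilation `h = g (√2 ·)` moves both thresholds to `a√2`.
-/

open Real MeasureTheory

open scoped FourierTransform RealInnerProductSpace

namespace Real

variable {V E : Type*} [NormedAddCommGroup V] [InnerProductSpace ℝ V] [MeasurableSpace V]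
  [BorelSpace V] [FiniteDimensional ℝ V] [NormedAddCommGroup E] [NormedSpace ℂ E]

theorem fourier_add_of_integrable {f g : V → E} (hf : Integrable f) (hg : Integrable g) :
    𝓕 (f + g) = 𝓕 f + 𝓕 g :=
  VectorFourier.fourierIntegral_add continuous_fourierChar continuous_inner hf hg

theorem fourier_const_smul (r : ℂ) (f : V → E) : 𝓕 (r • f) = r • 𝓕 f :=
  VectorFourier.fourierIntegral_const_smul _ _ _ _ _

theorem fourier_comp_add_right (f : V → E) (v₀ w : V) :
    𝓕 (fun v ↦ f (v + v₀)) w = 𝐞 ⟪v₀, w⟫ • 𝓕 f w :=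
  congrFun (VectorFourier.fourierIntegral_comp_add_right _ _ _ f v₀) w

theorem fourier_comp_smul (f : V → E) {c : ℝ} (hc : c ≠ 0) (w : V) :
    𝓕 (fun v ↦ f (c • v)) w = |(c ^ Module.finrank ℝ V)⁻¹| • 𝓕 f (c⁻¹ • w) := by
  simp only [fourier_eq]
  rw [← Measure.integral_comp_smul (μ := volume) (fun v ↦ 𝐞 (-⟪v, c⁻¹ • w⟫) • f v) c]
  congr 1 with v
  rw [inner_smul_left, inner_smul_right]
  simp [hc]

theorem fourier_comp_mul_left (f : ℝ → E) {c : ℝ} (hc : c ≠ 0) (w : ℝ) :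
    𝓕 (fun x ↦ f (c * x)) w = |c⁻¹| • 𝓕 f (c⁻¹ * w) := by
  simpa using fourier_comp_smul f hc w

theorem fourier_zero_eq_integral (f : V → E) : 𝓕 f 0 = ∫ v, f v := by
  simp [fourier_eq]

theorem fourierChar_neg_add_fourierChar (x : ℝ) :
    (𝐞 (-x) : ℂ) + 𝐞 x = (2 * Real.cos (2 * π * x) : ℝ) := by
  rw [fourierChar_apply, fourierChar_apply]
  push_cast
  rw [Complex.two_cos]
  ring_nf

end Real

/-- `shiftSum b f = (δ_b + δ_{-b} + 2δ_0) * f`. -/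
def shiftSum {M : Type*} [AddCommMonoid M] (b : ℝ) (f : ℝ → M) (x : ℝ) : M :=
  f (x - b) + f (x + b) + 2 • f x

section ShiftSum

variable {M : Type*} {b : ℝ} {f : ℝ → M}

theorem shiftSum_neg [AddCommMonoid M] (heven : ∀ x, f (-x) = f x) (x : ℝ) :
    shiftSum b f (-x) = shiftSum b f x := by
  rw [shiftSum, shiftSum, show -x - b = -(x + b) by ring, show -x + b = -(x - b) by ring,
    heven, heven, heven, add_comm (f (x + b))]

theorem MeasureTheory.Integrable.shiftSum [NormedAddCommGroup M] (hf : Integrable f) :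
    Integrable (shiftSum b f) := by
  have h2 : Integrable fun x ↦ 2 • f x := by
    simpa only [two_nsmul] using (hf.add hf : Integrable fun x ↦ f x + f x)
  exact ((hf.comp_sub_right b).add (hf.comp_add_right b)).add h2

theorem Continuous.shiftSum [AddCommMonoid M] [TopologicalSpace M] [ContinuousAdd M]
    (hf : Continuous f) : Continuous (shiftSum b f) := by
  unfold _root_.shiftSum; fun_prop

theorem Real.fourier_shiftSum [NormedAddCommGroup M] [NormedSpace ℂ M] (hf : Integrable f)
    (w : ℝ) : 𝓕 (shiftSum b f) w = (2 * Real.cos (2 * π * b * w) + 2) • 𝓕 f w := by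
  have hsplit : shiftSum b f = (fun x ↦ f (x + -b)) + (fun x ↦ f (x + b)) + (2 : ℂ) • f := by
    ext x; simp [shiftSum, sub_eq_add_neg, two_smul]
  rw [hsplit, fourier_add_of_integrable ((hf.comp_add_right _).add (hf.comp_add_right _))
    (hf.smul _), fourier_add_of_integrable (hf.comp_add_right _) (hf.comp_add_right _),
    fourier_const_smul]
  simp only [Pi.add_apply, Pi.smul_apply, fourier_comp_add_right, Circle.smul_def]
  rw [inner_neg_left, ← add_smul, fourierChar_neg_add_fourierChar, ← add_smul,
    ← Complex.coe_smul]
  simp [mul_assoc, mul_comm w]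

end ShiftSum

theorem ofReal_shiftSum (b : ℝ) (f : ℝ → ℝ) :
    (fun x ↦ ((shiftSum b f x : ℝ) : ℂ)) = shiftSum b (fun x ↦ (f x : ℂ)) := by
  ext x; simp [shiftSum]

/-- For even continuous `g` and `r > 0`, `NonnegBeyond r g` means `A(g) ≤ r`. -/
def NonnegBeyond (r : ℝ) (g : ℝ → ℝ) : Prop :=
  ∀ x, r ≤ |x| → 0 ≤ g x

namespace NonnegBeyond

variable {r s : ℝ} {g : ℝ → ℝ}

theorem mono (hg : NonnegBeyond r g) (hrs : r ≤ s) : NonnegBeyond s g :=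
  fun x hx ↦ hg x (hrs.trans hx)

theorem mul_left {m : ℝ → ℝ} (hm : ∀ x, 0 ≤ m x) (hg : NonnegBeyond r g) :
    NonnegBeyond r (fun x ↦ m x * g x) :=
  fun x hx ↦ mul_nonneg (hm x) (hg x hx)

theorem comp_mul_left {c : ℝ} (hc : 0 < c) (hg : NonnegBeyond r g) :
    NonnegBeyond (r / c) (fun x ↦ g (c * x)) := by
  intro x hx
  apply hg
  rw [abs_mul, abs_of_pos hc, mul_comm]
  exact (div_le_iff₀ hc).1 hx

theorem shiftSum (hg : NonnegBeyond r g) (b : ℝ) : NonnegBeyond (r + |b|) (shiftSum b g) := by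
  intro x hx
  have h₁ : r ≤ |x - b| := by linarith [abs_sub_abs_le_abs_sub x b]
  have h₂ : r ≤ |x + b| := by linarith [abs_sub_abs_le_abs_add x b]
  have h₀ : r ≤ |x| := by linarith [abs_nonneg b]
  exact add_nonneg (add_nonneg (hg _ h₁) (hg _ h₂)) (nsmul_nonneg (hg x h₀) 2)

theorem re_fourier_comp_mul_left {c : ℝ} (hc : 0 < c)
    (hg : NonnegBeyond r fun y ↦ (𝓕 (fun x ↦ (g x : ℂ)) y).re) :
    NonnegBeyond (r * c) fun y ↦ (𝓕 (fun x ↦ (g (c * x) : ℂ)) y).re := by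
  have h := (hg.comp_mul_left (inv_pos.2 hc)).mul_left (fun _ ↦ abs_nonneg c⁻¹)
  rw [div_inv_eq_mul] at h
  intro y hy
  dsimp only
  rw [fourier_comp_mul_left (fun x ↦ (g x : ℂ)) hc.ne', Complex.smul_re, smul_eq_mul]
  exact h y hy

end NonnegBeyond

theorem Continuous.exists_neg_of_integral_eq_zero {X : Type*} [TopologicalSpace X]
    [MeasurableSpace X] [OpensMeasurableSpace X] {μ : Measure X} [μ.IsOpenPosMeasure]
    {f : X → ℝ} (hcont : Continuous f) (hint : Integrable f μ) (hmean : ∫ x, f x ∂μ = 0)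
    (hne : f ≠ 0) : ∃ x, f x < 0 := by
  by_contra! hnonneg
  exact hne <| (hcont.ae_eq_iff_eq μ continuous_const).1 <|
    (integral_eq_zero_iff_of_nonneg hnonneg hint).1 hmean

theorem stmt_19_general (f : ℝ → ℝ) (hint : Integrable f) (hcont : Continuous f)
    (heven : ∀ x, f (-x) = f x) (hne : f ≠ 0)
    (hself : ∀ y, FourierTransform.fourier (fun x => (f x : ℂ)) y = (f y : ℂ))
    (hf0 : f 0 = 0) (a : ℝ) (hpos : ∀ x : ℝ, a ≤ |x| → 0 ≤ f x) :
    ∃ h : ℝ → ℝ, Integrable h ∧ Continuous h ∧ (∀ x, h (-x) = h x) ∧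
      h 0 < 0 ∧
      FourierTransform.fourier (fun x => (h x : ℂ)) 0 = 0 ∧
      (∀ x : ℝ, a * Real.sqrt 2 ≤ |x| → 0 ≤ h x) ∧
      (∀ y : ℝ, a * Real.sqrt 2 ≤ |y| →
        0 ≤ (FourierTransform.fourier (fun x => (h x : ℂ)) y).re) := by
  have hmean : ∫ x, f x = 0 := by
    have h := fourier_zero_eq_integral (fun x ↦ (f x : ℂ))
    rw [hself, hf0, integral_complex_ofReal] at h
    exact_mod_cast h.symm
  obtain ⟨b, hb⟩ := hcont.exists_neg_of_integral_eq_zero hint hmean hne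
  have hba : |b| < a := lt_of_not_ge fun h ↦ (hpos b h).not_gt hb
  set g := shiftSum b f
  have hĝ : ∀ y, 𝓕 (fun x ↦ (g x : ℂ)) y = ((2 * cos (2 * π * b * y) + 2) * f y : ℝ) := by
    intro y
    rw [ofReal_shiftSum, Real.fourier_shiftSum hint.ofReal, hself, Complex.real_smul]
    norm_cast
  have hĝ_nonneg : NonnegBeyond a fun y ↦ (𝓕 (fun x ↦ (g x : ℂ)) y).re := by
    simp only [hĝ, Complex.ofReal_re]
    exact NonnegBeyond.mul_left (fun y ↦ by linarith [neg_one_le_cos (2 * π * b * y)]) hpos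
  have hg_nonneg : NonnegBeyond (2 * a) g :=
    (NonnegBeyond.shiftSum hpos b).mono (by linarith)
  have hsqrt2 : 0 < √2 := by positivity
  refine ⟨fun x ↦ g (√2 * x), hint.shiftSum.comp_mul_left' hsqrt2.ne',
    hcont.shiftSum.comp (by fun_prop), fun x ↦ by simp only [mul_neg, g, shiftSum_neg heven],
    ?_, ?_, (hg_nonneg.comp_mul_left hsqrt2).mono ?_, hĝ_nonneg.re_fourier_comp_mul_left hsqrt2⟩
  · simp only [g, shiftSum, mul_zero, zero_sub, zero_add, heven, hf0, smul_zero, add_zero]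
    linarith
  · rw [Real.fourier_comp_mul_left (fun x ↦ (g x : ℂ)) hsqrt2.ne', mul_zero, hĝ, hf0]
    simp
  · rw [div_le_iff₀ hsqrt2, mul_assoc, Real.mul_self_sqrt zero_le_two, mul_comm]

/-- For every real even nonzero `f ∈ L¹(ℝ)` with `f = f̂`, `f 0 = 0`, and `f ≥ 0` on
`{|x| ≥ a}` (`a > 0`), there is a real even `h ∈ L¹` with `h(0) < 0`, `ĥ(0) = 0`, and
both `h ≥ 0` and `ĥ ≥ 0` on `{|x| ≥ a√2}`; hence `B₁⁻ ≤ 2·A₁²`. -/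
theorem stmt_19 (f : ℝ → ℝ) (hint : Integrable f) (hcont : Continuous f)
    (heven : ∀ x, f (-x) = f x) (hne : f ≠ 0)
    (hself : ∀ y, FourierTransform.fourier (fun x => (f x : ℂ)) y = (f y : ℂ))
    (hf0 : f 0 = 0) (a : ℝ) (ha : 0 < a) (hpos : ∀ x : ℝ, a ≤ |x| → 0 ≤ f x) :
    ∃ h : ℝ → ℝ, Integrable h ∧ Continuous h ∧ (∀ x, h (-x) = h x) ∧
      h 0 < 0 ∧
      FourierTransform.fourier (fun x => (h x : ℂ)) 0 = 0 ∧
      (∀ x : ℝ, a * Real.sqrt 2 ≤ |x| → 0 ≤ h x) ∧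
      (∀ y : ℝ, a * Real.sqrt 2 ≤ |y| →
        0 ≤ (FourierTransform.fourier (fun x => (h x : ℂ)) y).re) :=
  stmt_19_general f hint hcont heven hne hself hf0 a hpos
end
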